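/- Let ρ = (11/2, 5/2, 3/2, 1/2) be the half-sum of the positive system Δ⁺(F4) = {e_i : 1≤i≤4} ∪ {e_i±e_j : 1≤i<j≤4} ∪ {(e₁±e₂±e₃±e₄)/2} of Δ(F4), let μ₁ = 2ϖ₂+4ϖ₄ = (3,1,1,1) and μ₂ = 3ϖ₃+ϖ₄ = (2,−1,3,0) (the two spin-lowest K-types of the FS-scattered Dirac series of F₄₍₄₎ with atlas parameter x=176). Then there exist elements w, w′ of the Weyl group W(F4) (the group generated by the reflections of ℝ⁴ in the elements of Δ(F4)) such that: det(w) = 1, det(w′) = −1, both wρ and w′ρ are Δ⁺(k)-dominant, and the unique Δ⁺(k)-dominant element of the W(k)-orbit of μ₁ − (wρ − ρ_c) and the unique Δ⁺(k)-dominant element of the W(k)-orbit of μ₂ − (w′ρ − ρ_c) are both equal to ϖ₄ = (1/2,1/2,0,0). (Explicit witnesses: w = s_{α₄}s_{α₃} and w′ = s_{α₄}s_{α₃}s_{α₂}s_{α₁}s_{α₃}s_{α₂}s_{α₃}, where s_α is the reflection in α and α₁=(e₁−e₂−e₃−e₄)/2, α₂=e₄, α₃=e₃−e₄, α₄=e₂−e₃;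 then wρ−ρ_c = 2ϖ₂+5ϖ₄ and w′ρ−ρ_c = 3ϖ₃. This computation shows that the even and the odd part of the Dirac cohomology of this representation share the K̃-type with highest weight ϖ₄, disproving the 2015 conjecture that no such cancellation occurs.) -/

import Mathlib

/-!
The even and odd parts of the Dirac cohomology of the FS-scattered Dirac series of
F₄₍₄₎ with atlas parameter `x = 176` share the K̃-type with highest weight `ϖ₄`:
there are Weyl group elements `w, w'` of determinants `1` and `−1` with `wρ, w'ρ`
dominant for `Δ⁺(k)` such that the dominant `W(k)`-conjugates of
`μ₁ − (wρ − ρ_c)` and `μ₂ − (w'ρ − ρ_c)` are both `ϖ₄`.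
-/

noncomputable section

open scoped RealInnerProductSpace

namespace Stmt4

abbrev V4 : Type := EuclideanSpace ℝ (Fin 4)

def e (i : Fin 4) : V4 := EuclideanSpace.single i 1

def vec (a b c d : ℝ) : V4 := (WithLp.equiv 2 (Fin 4 → ℝ)).symm ![a, b, c, d]

/-- The root system of type `F₄` in `ℝ⁴`. -/
def ΔF4 : Set V4 :=
  {v | (∃ i, v = e i ∨ v = -e i) ∨
       (∃ i j, i < j ∧ (v = e i + e j ∨ v = e i - e j ∨ v = -e i + e j ∨ v = -e i - e j)) ∨
       (∃ s : Fin 4 → ℝ, (∀ i, s i = 1 ∨ s i = -1) ∧ v = (1 / 2 : ℝ) • ∑ i, s i • e i)}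

/-- `w` is the reflection in a root `α ∈ Δ`. -/
def IsReflIn (Δ : Set V4) (w : V4 ≃ₗᵢ[ℝ] V4) : Prop :=
  ∃ α ∈ Δ, ∀ x : V4, w x = x - (2 * ⟪x, α⟫ / ⟪α, α⟫) • α

/-- The group generated by the reflections in the elements of `Δ`. -/
def WeylGroup (Δ : Set V4) : Subgroup (V4 ≃ₗᵢ[ℝ] V4) :=
  Subgroup.closure {w | IsReflIn Δ w}

/-- `ξ` is dominant with respect to the positive roots `Δplus`. -/
def IsDom (Δplus : Set V4) (ξ : V4) : Prop := ∀ γ ∈ Δplus, 0 ≤ ⟪ξ, γ⟫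

/-- The compact roots for F₄₍₄₎: `±(e₁+e₂)` together with the roots in the
hyperplane `x₁ + x₂ = 0` (a system of type C₃ × A₁). -/
def Δk : Set V4 :=
  {v ∈ ΔF4 | v = e 0 + e 1 ∨ v = -(e 0 + e 1) ∨ v 0 + v 1 = 0}

/-- The simple roots `γ₁=(e₁−e₂−e₃−e₄)/2, γ₂=e₄, γ₃=e₃−e₄, γ₄=e₁+e₂` of `Δ⁺(k)`. -/
def γ : Fin 4 → V4 :=
  ![vec (1/2) (-1/2) (-1/2) (-1/2), vec 0 0 0 1, vec 0 0 1 (-1), vec 1 1 0 0]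

/-- The positive compact roots. -/
def Δplusk : Set V4 := {v ∈ Δk | ∃ n : Fin 4 → ℕ, v = ∑ j, (n j : ℝ) • γ j}

/-- Half sum of the positive compact roots. -/
def ρc : V4 := vec 2 (-1) (3/2) (1/2)

/-- Half sum of the positive system `Δ⁺(F₄)`. -/
def ρ : V4 := vec (11/2) (5/2) (3/2) (1/2)

/-- `μ₁ = 2ϖ₂ + 4ϖ₄ = (3,1,1,1)`, a spin-lowest K-type of the representation. -/
def μ1 : V4 := vec 3 1 1 1

/-- `μ₂ = 3ϖ₃ + ϖ₄ = (2,−1,3,0)`, the other spin-lowest K-type. -/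
def μ2 : V4 := vec 2 (-1) 3 0

/-- `ϖ₄ = (1/2,1/2,0,0)`. -/
def ϖ4 : V4 := vec (1/2) (1/2) 0 0

/-- The determinant of a linear isometry of `ℝ⁴`. -/
def dets (w : V4 ≃ₗᵢ[ℝ] V4) : ℝ := LinearMap.det (w.toLinearEquiv : V4 →ₗ[ℝ] V4)

/-!
Everything is explicit. The simple reflections act on coordinates by a transposition, a sign
change, or (for `α₁`) by the symmetric Hadamard-type map, so `wρ = (11/2, 1/2, 5/2, 3/2)` and
`w'ρ = (7/2, -5/2, 9/2, 1/2)`, both visibly `Δ⁺(k)`-dominant. Then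
`μ₂ - (w'ρ - ρ_c) = ϖ₄` already, while `μ₁ - (wρ - ρ_c) = -ϖ₄` is carried to `ϖ₄` by the
compact reflection in `e₁ + e₂`.
-/

def rootReflection (v : V4) : V4 ≃ₗᵢ[ℝ] V4 := Submodule.reflection (ℝ ∙ v)ᗮ

lemma rootReflection_apply (v x : V4) :
    rootReflection v x = x - (2 * ⟪x, v⟫ / ⟪v, v⟫) • v := by
  rw [rootReflection, Submodule.reflection_orthogonal_apply,
    Submodule.reflection_singleton_apply, real_inner_comm x v, real_inner_self_eq_norm_sq,
    neg_sub, two_smul, ← add_smul]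
  ring_nf
  norm_cast

lemma rootReflection_mem_weylGroup {Δ : Set V4} {v : V4} (hv : v ∈ Δ) :
    rootReflection v ∈ WeylGroup Δ :=
  Subgroup.subset_closure ⟨v, hv, rootReflection_apply v⟩

lemma dets_mul (w₁ w₂ : V4 ≃ₗᵢ[ℝ] V4) : dets (w₁ * w₂) = dets w₁ * dets w₂ :=
  LinearMap.det_comp _ _

lemma dets_one : dets 1 = 1 :=
  LinearMap.det_id

lemma dets_rootReflection {v : V4} (hv : v ≠ 0) : dets (rootReflection v) = -1 := by
  have h := Submodule.det_reflection (ℝ ∙ v)ᗮ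
  rwa [Submodule.orthogonal_orthogonal, finrank_span_singleton hv, pow_one] at h

def weylWord (l : List V4) : V4 ≃ₗᵢ[ℝ] V4 := (l.map rootReflection).prod

@[simp]
lemma weylWord_nil_apply (x : V4) : weylWord [] x = x := rfl

@[simp]
lemma weylWord_cons_apply (v : V4) (l : List V4) (x : V4) :
    weylWord (v :: l) x = rootReflection v (weylWord l x) := rfl

lemma weylWord_mem_weylGroup {Δ : Set V4} {l : List V4} (hl : ∀ v ∈ l, v ∈ Δ) :
    weylWord l ∈ WeylGroup Δ :=
  Subgroup.list_prod_mem _ <| List.forall_mem_map.2 fun _ hv =>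
    rootReflection_mem_weylGroup (hl _ hv)

lemma dets_weylWord {l : List V4} (hl : ∀ v ∈ l, v ≠ 0) :
    dets (weylWord l) = (-1) ^ l.length := by
  induction l with
  | nil => exact dets_one
  | cons v l ih =>
    simp only [List.forall_mem_cons] at hl
    rw [weylWord, List.map_cons, List.prod_cons, dets_mul, dets_rootReflection hl.1,
      ← weylWord, ih hl.2, List.length_cons, pow_succ']

lemma inner_vec (a b c d a' b' c' d' : ℝ) :
    ⟪vec a b c d, vec a' b' c' d'⟫ = a * a' + b * b' + c * c' + d * d' := by
  simp [vec, PiLp.inner_apply, Fin.sum_univ_four]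
  ring

lemma vec_sub (a b c d a' b' c' d' : ℝ) :
    vec a b c d - vec a' b' c' d' = vec (a - a') (b - b') (c - c') (d - d') := by
  ext i; fin_cases i <;> simp [vec]

lemma vec_sub_smul (r a b c d a' b' c' d' : ℝ) :
    vec a b c d - r • vec a' b' c' d' =
      vec (a - r * a') (b - r * b') (c - r * c') (d - r * d') := by
  ext i; fin_cases i <;> simp [vec]

lemma vec_eq_sum (a b c d : ℝ) : vec a b c d = a • e 0 + b • e 1 + c • e 2 + d • e 3 := by
  ext i; fin_cases i <;> simp [vec, e]

lemma vec_ne_zero {a b c d : ℝ} (h : a * a + b * b + c * c + d * d ≠ 0) : vec a b c d ≠ 0 := by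
  intro hv
  exact h (by rw [← inner_vec, hv, inner_zero_left])

/-- The simple roots of `Δ⁺(F₄)`, indexed like `γ`: `α i` is the paper's `α_{i+1}`. -/
def α : Fin 4 → V4 :=
  ![vec (1/2) (-1/2) (-1/2) (-1/2), vec 0 0 0 1, vec 0 0 1 (-1), vec 0 1 (-1) 0]

lemma α_mem_ΔF4 (i : Fin 4) : α i ∈ ΔF4 := by
  fin_cases i
  · refine Or.inr (Or.inr ⟨![1, -1, -1, -1], fun i => by fin_cases i <;> simp, ?_⟩)
    simp [α, vec_eq_sum, Fin.sum_univ_four, smul_add]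
    norm_num
  · exact Or.inl ⟨3, Or.inl (by simp [α, vec_eq_sum])⟩
  · exact Or.inr (Or.inl ⟨2, 3, by decide, Or.inr (Or.inl (by simp [α, vec_eq_sum]; abel))⟩)
  · exact Or.inr (Or.inl ⟨1, 2, by decide, Or.inr (Or.inl (by simp [α, vec_eq_sum]; abel))⟩)

lemma α_ne_zero (i : Fin 4) : α i ≠ 0 := by
  fin_cases i <;> exact vec_ne_zero (by norm_num)

lemma rootReflection_α_zero (x₁ x₂ x₃ x₄ : ℝ) :
    rootReflection (α 0) (vec x₁ x₂ x₃ x₄) =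
      vec ((x₁ + x₂ + x₃ + x₄) / 2) ((x₁ + x₂ - x₃ - x₄) / 2)
        ((x₁ - x₂ + x₃ - x₄) / 2) ((x₁ - x₂ - x₃ + x₄) / 2) := by
  rw [show α 0 = vec (1/2) (-1/2) (-1/2) (-1/2) from rfl, rootReflection_apply, inner_vec,
    inner_vec, vec_sub_smul]
  congr 1 <;> ring

lemma rootReflection_α_one (x₁ x₂ x₃ x₄ : ℝ) :
    rootReflection (α 1) (vec x₁ x₂ x₃ x₄) = vec x₁ x₂ x₃ (-x₄) := by
  rw [show α 1 = vec 0 0 0 1 from rfl, rootReflection_apply, inner_vec, inner_vec, vec_sub_smul]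
  congr 1 <;> ring

lemma rootReflection_α_two (x₁ x₂ x₃ x₄ : ℝ) :
    rootReflection (α 2) (vec x₁ x₂ x₃ x₄) = vec x₁ x₂ x₄ x₃ := by
  rw [show α 2 = vec 0 0 1 (-1) from rfl, rootReflection_apply, inner_vec, inner_vec, vec_sub_smul]
  congr 1 <;> ring

lemma rootReflection_α_three (x₁ x₂ x₃ x₄ : ℝ) :
    rootReflection (α 3) (vec x₁ x₂ x₃ x₄) = vec x₁ x₃ x₂ x₄ := by
  rw [show α 3 = vec 0 1 (-1) 0 from rfl, rootReflection_apply, inner_vec, inner_vec, vec_sub_smul]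
  congr 1 <;> ring

lemma γ_three_mem_Δk : γ 3 ∈ Δk := by
  have h : γ 3 = e 0 + e 1 := by simp [γ, vec_eq_sum]
  exact ⟨Or.inr (Or.inl ⟨0, 1, by decide, Or.inl h⟩), Or.inl h⟩

lemma rootReflection_γ_three (x₁ x₂ x₃ x₄ : ℝ) :
    rootReflection (γ 3) (vec x₁ x₂ x₃ x₄) = vec (-x₂) (-x₁) x₃ x₄ := by
  rw [show γ 3 = vec 1 1 0 0 from rfl, rootReflection_apply, inner_vec, inner_vec, vec_sub_smul]
  congr 1 <;> ring

lemma isDom_Δplusk_of_inner_γ_nonneg {ξ : V4} (h : ∀ j, 0 ≤ ⟪ξ, γ j⟫) : IsDom Δplusk ξ := by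
  rintro _ ⟨-, n, rfl⟩
  rw [inner_sum]
  exact Finset.sum_nonneg fun j _ => by
    rw [real_inner_smul_right]
    exact mul_nonneg (Nat.cast_nonneg _) (h j)

lemma isDom_Δplusk_vec {x₁ x₂ x₃ x₄ : ℝ} (h₁ : x₂ + x₃ + x₄ ≤ x₁) (h₂ : 0 ≤ x₄)
    (h₃ : x₄ ≤ x₃) (h₄ : 0 ≤ x₁ + x₂) : IsDom Δplusk (vec x₁ x₂ x₃ x₄) := by
  refine isDom_Δplusk_of_inner_γ_nonneg fun j => ?_
  fin_cases j <;> simp [γ, inner_vec] <;> linarith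

lemma weylWord_map_α_mem_weylGroup (l : List (Fin 4)) : weylWord (l.map α) ∈ WeylGroup ΔF4 :=
  weylWord_mem_weylGroup (List.forall_mem_map.2 fun i _ => α_mem_ΔF4 i)

lemma dets_weylWord_map_α (l : List (Fin 4)) : dets (weylWord (l.map α)) = (-1) ^ l.length := by
  rw [dets_weylWord (List.forall_mem_map.2 fun i _ => α_ne_zero i), List.length_map]

lemma weylWord_even_apply_ρ : weylWord ([3, 2].map α) ρ = vec (11/2) (1/2) (5/2) (3/2) := by
  simp only [List.map_cons, List.map_nil, weylWord_cons_apply, weylWord_nil_apply, ρ,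
    rootReflection_α_two, rootReflection_α_three]

lemma weylWord_odd_apply_ρ :
    weylWord ([3, 2, 1, 0, 2, 1, 2].map α) ρ = vec (7/2) (-5/2) (9/2) (1/2) := by
  simp only [List.map_cons, List.map_nil, weylWord_cons_apply, weylWord_nil_apply, ρ,
    rootReflection_α_zero, rootReflection_α_one, rootReflection_α_two, rootReflection_α_three]
  norm_num

/-- There exist `w, w' ∈ W(F₄)` with `det w = 1`, `det w' = −1`, `wρ` and `w'ρ`
`Δ⁺(k)`-dominant, such that the unique `Δ⁺(k)`-dominant elements of the
`W(k)`-orbits of `μ₁ − (wρ − ρ_c)` and of `μ₂ − (w'ρ − ρ_c)` both equal `ϖ₄`. -/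
theorem dirac_index_cancellation_FI :
    ∃ w ∈ WeylGroup ΔF4, ∃ w' ∈ WeylGroup ΔF4,
      dets w = 1 ∧ dets w' = -1 ∧
      IsDom Δplusk (w ρ) ∧ IsDom Δplusk (w' ρ) ∧
      IsDom Δplusk ϖ4 ∧
      (∃ u ∈ WeylGroup Δk, u (μ1 - (w ρ - ρc)) = ϖ4) ∧
      (∃ u' ∈ WeylGroup Δk, u' (μ2 - (w' ρ - ρc)) = ϖ4) := by
  refine ⟨_, weylWord_map_α_mem_weylGroup [3, 2],
    _, weylWord_map_α_mem_weylGroup [3, 2, 1, 0, 2, 1, 2], ?_, ?_, ?_, ?_, ?_, ?_, ?_⟩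
  · exact (dets_weylWord_map_α [3, 2]).trans (by norm_num)
  · exact (dets_weylWord_map_α [3, 2, 1, 0, 2, 1, 2]).trans (by norm_num)
  · rw [weylWord_even_apply_ρ]
    exact isDom_Δplusk_vec (by norm_num) (by norm_num) (by norm_num) (by norm_num)
  · rw [weylWord_odd_apply_ρ]
    exact isDom_Δplusk_vec (by norm_num) (by norm_num) (by norm_num) (by norm_num)
  · exact isDom_Δplusk_vec (by norm_num) (by norm_num) (by norm_num) (by norm_num)
  · refine ⟨_, rootReflection_mem_weylGroup γ_three_mem_Δk, ?_⟩
    rw [weylWord_even_apply_ρ, μ1, ρc, vec_sub, vec_sub, rootReflection_γ_three, ϖ4]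
    norm_num
  · refine ⟨1, one_mem _, ?_⟩
    rw [LinearIsometryEquiv.coe_one, id, weylWord_odd_apply_ρ, μ2, ρc, vec_sub, vec_sub, ϖ4]
    norm_num

end Stmt4
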